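/- There exists an absolute constant c ∈ ℝ⁺ such that the following holds. Let s ∈ {1,…,N}, η ∈ (0,1), and suppose M ∈ ℝ^{m×N} has the Restricted Isometry Property of order (4s, 0.1). Then there exists a map g : ℂ^m → ℂ^N such that for all u ∈ ℂ^N and all e ∈ ℂ^m: ‖u − g(Mu + e)‖₂ ≤ c · max{ η, (1/√s)·‖u − u_s‖₁ + ‖e‖₂ }. -/

import Mathlib

/-- The squared Euclidean (ℓ²) norm of a vector in `ℂ^n`. -/
noncomputable def nsq {n : ℕ} (x : Fin n → ℂ) : ℝ := ∑ i, ‖x i‖ ^ 2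

/-- The Euclidean (ℓ²) norm of a vector in `ℂ^n`. -/
noncomputable def l2 {n : ℕ} (x : Fin n → ℂ) : ℝ := Real.sqrt (nsq x)

/-- A real matrix `M` has the Restricted Isometry Property of order `(s, ε)`:
`(1−ε)‖x‖₂² ≤ ‖Mx‖₂² ≤ (1+ε)‖x‖₂²` for all `x ∈ ℂ^N` with at most `s` nonzero entries. -/
def RIP {m N : ℕ} (M : Matrix (Fin m) (Fin N) ℝ) (s : ℕ) (ε : ℝ) : Prop :=
  ∀ x : Fin N → ℂ, Set.ncard {i | x i ≠ 0} ≤ s →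
    (1 - ε) * nsq x ≤ nsq ((M.map (fun a => (a : ℂ))).mulVec x) ∧
    nsq ((M.map (fun a => (a : ℂ))).mulVec x) ≤ (1 + ε) * nsq x

/-- The best `s`-sparse approximation error of `u` in the ℓ¹ norm:
`‖u − u_s‖₁ = inf { ‖u − v‖₁ : v is s-sparse }`. -/
noncomputable def bestErr1 {N : ℕ} (u : Fin N → ℂ) (s : ℕ) : ℝ :=
  sInf {t : ℝ | ∃ v : Fin N → ℂ, Set.ncard {i | v i ≠ 0} ≤ s ∧ t = ∑ i, ‖u i - v i‖}


/-!
The decoder returns an `η`-near minimiser `x` of `‖Mx - y‖₂` over `2s`-sparse vectors. Fix any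
`s`-sparse `v`, let `T` index `s` largest entries of `u - v` and put `a = v + (u - v)_T`, which is
`2s`-sparse. Then `‖u - a‖₂ ≤ ‖u - v‖₁/√s`, and cutting the tail `u - a` into consecutive blocks of
`s` entries of decreasing size gives `‖M(u - a)‖₂ ≤ 2‖u - v‖₁/√s`. So `a` fits `y = Mu + e` up to
`O(‖u - v‖₁/√s + ‖e‖₂)`, hence so does `x`, and the lower RIP bound on the `4s`-sparse `x - a`
turns this into a bound on `‖x - a‖₂`. Taking the infimum over `v` gives the constant `11`.
-/

open Finset Matrix

section Sparse

variable {ι M : Type*} [AddGroup M]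

def Sparse (k : ℕ) (x : ι → M) : Prop := (Function.support x).ncard ≤ k

theorem Sparse.mono {k l : ℕ} {x : ι → M} (hx : Sparse k x) (h : k ≤ l) : Sparse l x :=
  hx.trans h

theorem sparse_zero (k : ℕ) : Sparse k (0 : ι → M) := by
  simp [Sparse]

theorem Sparse.add [Finite ι] {k l : ℕ} {x y : ι → M} (hx : Sparse k x) (hy : Sparse l y) :
    Sparse (k + l) (x + y) :=
  ((Set.ncard_le_ncard (Function.support_add x y)).trans (Set.ncard_union_le _ _)).trans
    (add_le_add hx hy)

theorem Sparse.sub [Finite ι] {k l : ℕ} {x y : ι → M} (hx : Sparse k x) (hy : Sparse l y) :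
    Sparse (k + l) (x - y) :=
  ((Set.ncard_le_ncard (Function.support_sub x y)).trans (Set.ncard_union_le _ _)).trans
    (add_le_add hx hy)

theorem sparse_indicator (T : Finset ι) (x : ι → M) : Sparse T.card ((T : Set ι).indicator x) := by
  rw [Sparse, Set.support_indicator, ← Set.ncard_coe_finset]
  exact Set.ncard_le_ncard Set.inter_subset_left T.finite_toSet

end Sparse

section Head

variable {ι : Type*}

/-- A weakening of "`T` indexes `s` largest entries of `z`" that also covers `s` larger than the
dimension, where `T = univ` qualifies. -/
def IsHead (s : ℕ) (z : ι → ℂ) (T : Finset ι) : Prop :=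
  T.card ≤ s ∧ ∀ i ∉ T, s * ‖z i‖ ≤ ∑ j ∈ T, ‖z j‖

theorem exists_isHead [Fintype ι] (s : ℕ) (z : ι → ℂ) : ∃ T, IsHead s z T := by
  classical
  obtain ⟨T, hT, hmax⟩ := (univ.powersetCard (min s (Fintype.card ι))).exists_max_image
    (fun T => ∑ j ∈ T, ‖z j‖) (powersetCard_nonempty.2 (by simp))
  rw [mem_powersetCard] at hT
  -- swapping `j ∈ T` for `i ∉ T` cannot increase the sum over `T`
  have hswap : ∀ i ∉ T, ∀ j ∈ T, ‖z i‖ ≤ ‖z j‖ := by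
    intro i hi j hj
    have hi' : i ∉ T.erase j := fun h => hi (mem_of_mem_erase h)
    have hcard : (insert i (T.erase j)).card = min s (Fintype.card ι) := by
      rw [card_insert_of_notMem hi', card_erase_of_mem hj, hT.2,
        Nat.sub_add_cancel (hT.2 ▸ card_pos.2 ⟨j, hj⟩)]
    have := hmax _ (mem_powersetCard.2 ⟨subset_univ _, hcard⟩)
    rw [sum_insert hi', ← add_sum_erase T _ hj] at this
    linarith
  refine ⟨T, hT.2.trans_le (min_le_left _ _), fun i hi => ?_⟩
  have hcard : T.card = s := by
    by_contra hne
    exact hi (eq_univ_of_card T (by omega) ▸ mem_univ i)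
  calc (s : ℝ) * ‖z i‖ = ∑ _j ∈ T, ‖z i‖ := by simp [hcard]
    _ ≤ ∑ j ∈ T, ‖z j‖ := sum_le_sum (hswap i hi)

variable {s : ℕ} {z : ι → ℂ} {T : Finset ι}

theorem IsHead.norm_tail_le (h : IsHead s z T) (hs : 0 < s) (i : ι) :
    ‖(↑T : Set ι)ᶜ.indicator z i‖ ≤ (∑ j ∈ T, ‖z j‖) / s := by
  rw [le_div_iff₀ (by exact_mod_cast hs)]
  by_cases hi : i ∈ T
  · simp [hi, sum_nonneg]
  · simpa [hi, mul_comm] using h.2 i hi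

theorem IsHead.ncard_support_tail_lt [Finite ι] (h : IsHead s z T) (hs : 0 < s)
    (hne : (↑T : Set ι)ᶜ.indicator z ≠ 0) :
    (Function.support ((↑T : Set ι)ᶜ.indicator z)).ncard < (Function.support z).ncard := by
  obtain ⟨i, hi⟩ := Function.ne_iff.1 hne
  have hiT : i ∉ T := fun h => hi (by simp [h])
  have hzi : z i ≠ 0 := fun h => hi (by simp [h])
  obtain ⟨j, hjT, hzj⟩ : ∃ j ∈ T, z j ≠ 0 := by
    by_contra! hT
    have := h.2 i hiT
    rw [sum_eq_zero fun j hj => by simp [hT j hj]] at this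
    have hs' : (0 : ℝ) < s := by exact_mod_cast hs
    exact hzi (norm_eq_zero.1 (by nlinarith [norm_nonneg (z i)]))
  rw [Set.support_indicator]
  refine Set.ncard_lt_ncard ((Set.ssubset_iff_of_subset Set.inter_subset_right).2 ⟨j, hzj, ?_⟩)
  simp [hjT]

end Head

theorem sum_norm_indicator_add_compl {ι : Type*} [Fintype ι] (z : ι → ℂ) (T : Finset ι) :
    ∑ j ∈ T, ‖z j‖ + ∑ i, ‖(↑T : Set ι)ᶜ.indicator z i‖ = ∑ i, ‖z i‖ := by
  rw [← sum_indicator_subset (fun i => ‖z i‖) (subset_univ T), ← sum_add_distrib]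
  refine sum_congr rfl fun i _ => ?_
  by_cases hi : i ∈ T <;> simp [hi]

section L2

variable {n : ℕ}

theorem nsq_nonneg (x : Fin n → ℂ) : 0 ≤ nsq x :=
  sum_nonneg fun _ _ => by positivity

theorem l2_nonneg (x : Fin n → ℂ) : 0 ≤ l2 x := Real.sqrt_nonneg _

theorem l2_eq_norm (x : Fin n → ℂ) : l2 x = ‖WithLp.toLp 2 x‖ := by
  simp [l2, nsq, EuclideanSpace.norm_eq]

@[simp] theorem l2_zero : l2 (0 : Fin n → ℂ) = 0 := by
  simp [l2_eq_norm]

theorem l2_add_le (x y : Fin n → ℂ) : l2 (x + y) ≤ l2 x + l2 y := by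
  simpa [l2_eq_norm] using norm_add_le (WithLp.toLp 2 x) (WithLp.toLp 2 y)

theorem l2_sub_le (x y : Fin n → ℂ) : l2 (x - y) ≤ l2 x + l2 y := by
  simpa [l2_eq_norm] using norm_sub_le (WithLp.toLp 2 x) (WithLp.toLp 2 y)

theorem l2_sub_comm (x y : Fin n → ℂ) : l2 (x - y) = l2 (y - x) := by
  simpa [l2_eq_norm] using norm_sub_rev (WithLp.toLp 2 x) (WithLp.toLp 2 y)

theorem l2_le_iff {x : Fin n → ℂ} {c : ℝ} (hc : 0 ≤ c) : l2 x ≤ c ↔ nsq x ≤ c ^ 2 := by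
  rw [l2, Real.sqrt_le_iff, and_iff_right hc]

theorem nsq_le_mul_sum_norm {x : Fin n → ℂ} {b : ℝ} (hb : ∀ i, ‖x i‖ ≤ b) :
    nsq x ≤ b * ∑ i, ‖x i‖ := by
  rw [nsq, mul_sum]
  exact sum_le_sum fun i _ => by rw [sq]; exact mul_le_mul_of_nonneg_right (hb i) (norm_nonneg _)

theorem Sparse.nsq_le {k : ℕ} {x : Fin n → ℂ} (hx : Sparse k x) {b : ℝ} (hb : ∀ i, ‖x i‖ ≤ b) :
    nsq x ≤ k * b ^ 2 := by
  classical
  have hcard : (univ.filter fun i => x i ≠ 0).card ≤ k := by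
    simpa [Sparse, Set.ncard_eq_toFinset_card'] using hx
  calc nsq x = ∑ i ∈ univ.filter (fun i => x i ≠ 0), ‖x i‖ ^ 2 := by
        rw [nsq, sum_filter_of_ne fun i _ h => by simpa using h]
    _ ≤ (univ.filter fun i => x i ≠ 0).card • b ^ 2 :=
        sum_le_card_nsmul _ _ _ fun i _ => pow_le_pow_left₀ (norm_nonneg _) (hb i) 2
    _ ≤ k * b ^ 2 := by
        rw [nsmul_eq_mul]
        exact mul_le_mul_of_nonneg_right (by exact_mod_cast hcard) (sq_nonneg b)

end L2

section RIP

variable {m N k : ℕ} {M : Matrix (Fin m) (Fin N) ℝ} {ε : ℝ} {x : Fin N → ℂ}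

theorem RIP.l2_mulVec_le (h : RIP M k ε) (hx : Sparse k x) :
    l2 (M.map (fun a => (a : ℂ)) *ᵥ x) ≤ √(1 + ε) * l2 x := by
  rw [l2, l2, ← Real.sqrt_mul' _ (nsq_nonneg x)]
  exact Real.sqrt_le_sqrt (h x hx).2

theorem RIP.sqrt_mul_l2_le (h : RIP M k ε) (hx : Sparse k x) :
    √(1 - ε) * l2 x ≤ l2 (M.map (fun a => (a : ℂ)) *ᵥ x) := by
  rw [l2, l2, ← Real.sqrt_mul' _ (nsq_nonneg x)]
  exact Real.sqrt_le_sqrt (h x hx).1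

end RIP

section Tail

variable {N s : ℕ} {z : Fin N → ℂ} {T : Finset (Fin N)}

theorem IsHead.l2_tail_le (h : IsHead s z T) (hs : 0 < s) :
    l2 ((↑T : Set (Fin N))ᶜ.indicator z) ≤ (∑ i, ‖z i‖) / √s := by
  have hsum := sum_norm_indicator_add_compl z T
  have hT : 0 ≤ ∑ j ∈ T, ‖z j‖ := sum_nonneg fun _ _ => norm_nonneg _
  have htail : 0 ≤ ∑ i, ‖(↑T : Set (Fin N))ᶜ.indicator z i‖ := sum_nonneg fun _ _ => norm_nonneg _
  rw [l2_le_iff (by positivity), div_pow, Real.sq_sqrt (Nat.cast_nonneg s)]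
  calc nsq _ ≤ (∑ j ∈ T, ‖z j‖) / s * ∑ i, ‖(↑T : Set (Fin N))ᶜ.indicator z i‖ :=
        nsq_le_mul_sum_norm (h.norm_tail_le hs)
    _ ≤ (∑ i, ‖z i‖) / s * ∑ i, ‖z i‖ := by gcongr ?_ / _ * ?_ <;> linarith
    _ = (∑ i, ‖z i‖) ^ 2 / s := by ring

theorem IsHead.l2_indicator_tail_le (h : IsHead s z T) (hs : 0 < s) {S : Finset (Fin N)}
    (hS : S.card ≤ s) :
    l2 ((↑S : Set (Fin N)).indicator ((↑T : Set (Fin N))ᶜ.indicator z)) ≤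
      (∑ j ∈ T, ‖z j‖) / √s := by
  have hT : 0 ≤ ∑ j ∈ T, ‖z j‖ := sum_nonneg fun _ _ => norm_nonneg _
  have hs' : (0 : ℝ) < s := by exact_mod_cast hs
  rw [l2_le_iff (by positivity)]
  calc nsq _ ≤ s * ((∑ j ∈ T, ‖z j‖) / s) ^ 2 :=
        ((sparse_indicator S _).mono hS).nsq_le fun i =>
          norm_indicator_le_norm_self _ _ |>.trans (h.norm_tail_le hs i)
    _ = ((∑ j ∈ T, ‖z j‖) / √s) ^ 2 := by
        rw [div_pow, div_pow, Real.sq_sqrt hs'.le]; field_simp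

/-- Peeling off successive heads `T₁, T₂, …` of the tail, each block `T_{k+1}` has ℓ² norm at most
`‖z_{T_k}‖₁ / √s`, and these ℓ¹ norms add up to at most `‖z‖₁`. -/
theorem IsHead.l2_mulVec_tail_le {m : ℕ} {A : Matrix (Fin m) (Fin N) ℂ} {α : ℝ} (hα : 0 ≤ α)
    (hs : 0 < s) (hA : ∀ x, Sparse s x → l2 (A *ᵥ x) ≤ α * l2 x) (h : IsHead s z T) :
    l2 (A *ᵥ (↑T : Set (Fin N))ᶜ.indicator z) ≤ α * ((∑ i, ‖z i‖) / √s) := by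
  induction hn : (Function.support z).ncard using Nat.strong_induction_on generalizing z T with
  | _ n ih =>
  set w := (↑T : Set (Fin N))ᶜ.indicator z
  by_cases hw : w = 0
  · rw [hw, mulVec_zero, l2_zero]
    positivity
  obtain ⟨T', hT'⟩ := exists_isHead s w
  have hhead : l2 (A *ᵥ (↑T' : Set (Fin N)).indicator w) ≤ α * ((∑ j ∈ T, ‖z j‖) / √s) :=
    (hA _ ((sparse_indicator T' w).mono hT'.1)).trans
      (mul_le_mul_of_nonneg_left (h.l2_indicator_tail_le hs hT'.1) hα)
  have htail := ih _ (hn ▸ h.ncard_support_tail_lt hs hw) hT' rfl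
  calc l2 (A *ᵥ w)
      = l2 (A *ᵥ (↑T' : Set (Fin N)).indicator w + A *ᵥ (↑T' : Set (Fin N))ᶜ.indicator w) := by
        rw [← mulVec_add, Set.indicator_self_add_compl]
    _ ≤ α * ((∑ j ∈ T, ‖z j‖) / √s) + α * ((∑ i, ‖w i‖) / √s) :=
        (l2_add_le _ _).trans (add_le_add hhead htail)
    _ = α * ((∑ i, ‖z i‖) / √s) := by
        rw [← sum_norm_indicator_add_compl z T]; ring

end Tail

theorem exists_le_add_of_bddBelow {α : Type*} {S : Set α} {f : α → ℝ} (hS : S.Nonempty)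
    (hf : BddBelow (f '' S)) {η : ℝ} (hη : 0 < η) : ∃ x ∈ S, ∀ w ∈ S, f x ≤ f w + η := by
  obtain ⟨_, ⟨x, hx, rfl⟩, hlt⟩ := Real.lt_sInf_add_pos (hS.image f) hη
  exact ⟨x, hx, fun w hw => hlt.le.trans (by gcongr; exact csInf_le hf ⟨w, hw, rfl⟩)⟩

theorem exists_near_best_sparse_fit {m N : ℕ} (A : Matrix (Fin m) (Fin N) ℂ) (k : ℕ) {η : ℝ}
    (hη : 0 < η) : ∃ g : (Fin m → ℂ) → Fin N → ℂ, ∀ y, Sparse k (g y) ∧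
      ∀ w, Sparse k w → l2 (A *ᵥ g y - y) ≤ l2 (A *ᵥ w - y) + η := by
  choose g hg using fun y : Fin m → ℂ => exists_le_add_of_bddBelow (S := {w | Sparse k w})
    (f := fun w => l2 (A *ᵥ w - y)) ⟨0, sparse_zero k⟩
    ⟨0, by rintro _ ⟨w, -, rfl⟩; exact l2_nonneg _⟩ hη
  exact ⟨g, hg⟩

theorem l2_sub_le_of_near_best_fit {m N s : ℕ} {A : Matrix (Fin m) (Fin N) ℂ} {α β η : ℝ}
    (hs : 0 < s) (hα : 0 ≤ α) (hβ : 0 ≤ β)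
    (hup : ∀ x, Sparse s x → l2 (A *ᵥ x) ≤ α * l2 x)
    (hdown : ∀ x, Sparse (4 * s) x → l2 x ≤ β * l2 (A *ᵥ x))
    {u v x : Fin N → ℂ} {e : Fin m → ℂ} (hv : Sparse s v) (hx : Sparse (2 * s) x)
    (hfit : ∀ w, Sparse (2 * s) w → l2 (A *ᵥ x - (A *ᵥ u + e)) ≤ l2 (A *ᵥ w - (A *ᵥ u + e)) + η) :
    l2 (u - x) ≤ (1 + 2 * α * β) * ((∑ i, ‖u i - v i‖) / √s) + 2 * β * l2 e + β * η := by
  obtain ⟨T, hT⟩ := exists_isHead s (u - v)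
  set K := (∑ i, ‖u i - v i‖) / √s
  set a := v + (↑T : Set (Fin N)).indicator (u - v)
  have hua : u - a = (↑T : Set (Fin N))ᶜ.indicator (u - v) := by
    rw [Set.indicator_compl, sub_add_eq_sub_sub]
  have ha : Sparse (2 * s) a := by
    rw [two_mul]; exact hv.add ((sparse_indicator T _).mono hT.1)
  have h_ua : l2 (u - a) ≤ K := hua ▸ hT.l2_tail_le hs
  have h_fit_a : l2 (A *ᵥ a - (A *ᵥ u + e)) ≤ α * K + l2 e := by
    rw [l2_sub_comm, show A *ᵥ u + e - A *ᵥ a = A *ᵥ (u - a) + e by rw [mulVec_sub]; abel]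
    exact (l2_add_le _ _).trans (add_le_add_left (hua ▸ hT.l2_mulVec_tail_le hα hs hup) _)
  have h_xa : l2 (x - a) ≤ β * ((α * K + l2 e + η) + (α * K + l2 e)) := by
    refine (hdown _ (by rw [show 4 * s = 2 * s + 2 * s by ring]; exact hx.sub ha)).trans ?_
    rw [show A *ᵥ (x - a) = (A *ᵥ x - (A *ᵥ u + e)) - (A *ᵥ a - (A *ᵥ u + e)) by
      rw [mulVec_sub]; abel]
    exact mul_le_mul_of_nonneg_left ((l2_sub_le _ _).trans
      (add_le_add ((hfit a ha).trans (by linarith)) h_fit_a)) hβ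
  calc l2 (u - x) = l2 ((u - a) + (a - x)) := by rw [sub_add_sub_cancel]
    _ ≤ K + β * ((α * K + l2 e + η) + (α * K + l2 e)) :=
        (l2_add_le _ _).trans (add_le_add h_ua (l2_sub_comm a x ▸ h_xa))
    _ = _ := by ring

theorem le_mul_bestErr1_div_add {N s : ℕ} (hs : 0 < s) {u : Fin N → ℂ} {C D L : ℝ} (hC : 0 < C)
    (h : ∀ v, Sparse s v → L ≤ C * ((∑ i, ‖u i - v i‖) / √s) + D) :
    L ≤ C * (bestErr1 u s / √s) + D := by
  have hsq : 0 < √(s : ℝ) := Real.sqrt_pos.2 (by exact_mod_cast hs)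
  have key : (L - D) / C * √s ≤ bestErr1 u s := by
    refine le_csInf ⟨_, 0, sparse_zero s, rfl⟩ ?_
    rintro _ ⟨v, hv, rfl⟩
    rw [← le_div_iff₀ hsq, div_le_iff₀' hC]
    linarith [h v hv]
  rw [← le_div_iff₀ hsq, div_le_iff₀' hC] at key
  linarith

/-- (CoSaMP-type guarantee.)  There is an absolute constant `c` such that for
any matrix `M` with the RIP of order `(4s, 0.1)` there is a recovery map `g : ℂ^m → ℂ^N` with
`‖u − g(Mu + e)‖₂ ≤ c·max{η, ‖u − u_s‖₁/√s + ‖e‖₂}` for all `u`, `e`. -/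
theorem stmt_11 :
    ∃ c : ℝ, 0 < c ∧
      ∀ (N m s : ℕ), 1 ≤ s → s ≤ N →
      ∀ η : ℝ, 0 < η → η < 1 →
      ∀ M : Matrix (Fin m) (Fin N) ℝ, RIP M (4 * s) 0.1 →
      ∃ g : (Fin m → ℂ) → (Fin N → ℂ),
        ∀ (u : Fin N → ℂ) (e : Fin m → ℂ),
          l2 (u - g ((M.map (fun a => (a : ℂ))).mulVec u + e)) ≤
            c * max η (bestErr1 u s / Real.sqrt s + l2 e) := by
  refine ⟨11, by norm_num, fun N m s hs _ η hη _ M hRIP => ?_⟩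
  have h_upper : √(1 + 0.1) ≤ 2 := Real.sqrt_le_iff.2 ⟨by norm_num, by norm_num⟩
  have h_lower : 1 / 2 ≤ √(1 - 0.1) := Real.le_sqrt_of_sq_le (by norm_num)
  have hup : ∀ x, Sparse s x → l2 (M.map (fun a => (a : ℂ)) *ᵥ x) ≤ 2 * l2 x := fun x hx =>
    (hRIP.l2_mulVec_le (hx.mono (by omega))).trans
      (mul_le_mul_of_nonneg_right h_upper (l2_nonneg x))
  have hdown : ∀ x, Sparse (4 * s) x → l2 x ≤ 2 * l2 (M.map (fun a => (a : ℂ)) *ᵥ x) :=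
    fun x hx => by
      linarith [hRIP.sqrt_mul_l2_le hx, mul_le_mul_of_nonneg_right h_lower (l2_nonneg x)]
  obtain ⟨g, hg⟩ := exists_near_best_sparse_fit (M.map (fun a => (a : ℂ))) (2 * s) hη
  refine ⟨g, fun u e => ?_⟩
  have hbound : l2 (u - g (M.map (fun a => (a : ℂ)) *ᵥ u + e)) ≤
      9 * (bestErr1 u s / √s) + (4 * l2 e + 2 * η) :=
    le_mul_bestErr1_div_add hs (by norm_num) fun v hv => by
      have := l2_sub_le_of_near_best_fit (u := u) (e := e) hs (by norm_num) (by norm_num) hup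
        hdown hv (hg _).1 (hg _).2
      linarith
  linarith [le_max_left η (bestErr1 u s / √s + l2 e), le_max_right η (bestErr1 u s / √s + l2 e),
    l2_nonneg e]
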